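/- Let Ω ⊆ ℝⁿ be a nonempty open convex set and φ : ℝⁿ → ℝ a function that is (Fréchet) differentiable at every point of Ω with gradient ∇φ Lipschitz continuous on Ω. Let G := {(u, ∇φ(u)) : u ∈ Ω} ⊆ ℝⁿ × ℝⁿ. Then φ is convex on Ω if and only if for every x ∈ Ω and every (w,z) ∈ T_G(x, ∇φ(x)), one has ⟨z,w⟩ ≥ 0. -/

import Mathlib

open scoped RealInnerProductSpace
open Filter Topology MeasureTheory Set

noncomputable section

variable {n : ℕ}

/-- Convexity of an extended-real-valued function `φ : ℝⁿ → ℝ ∪ {+∞}`. -/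
def ERealConvex {F : Type*} [AddCommGroup F] [Module ℝ F] (φ : F → EReal) : Prop :=
  ∀ x y : F, ∀ a b : ℝ, 0 ≤ a → 0 ≤ b → a + b = 1 →
    φ (a • x + b • y) ≤ (a : EReal) * φ x + (b : EReal) * φ y

/-- The shifted function `x ↦ φ(x) + (ρ/2)‖x‖²`. -/
def shiftFun (ρ : ℝ) (φ : EuclideanSpace ℝ (Fin n) → EReal) :
    EuclideanSpace ℝ (Fin n) → EReal :=
  fun x => φ x + (((ρ / 2) * ‖x‖ ^ 2 : ℝ) : EReal)

/-- The subdifferential of a `ρ`-weakly convex function. -/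
def subdiff (ρ : ℝ) (φ : EuclideanSpace ℝ (Fin n) → EReal)
    (x : EuclideanSpace ℝ (Fin n)) : Set (EuclideanSpace ℝ (Fin n)) :=
  {v | φ x ≠ ⊤ ∧
    ∀ u, φ x + ((⟪v, u - x⟫ - (ρ / 2) * ‖u - x‖ ^ 2 : ℝ) : EReal) ≤ φ u}

/-- Graph of the subdifferential mapping. -/
def gphSubdiff (ρ : ℝ) (φ : EuclideanSpace ℝ (Fin n) → EReal) :
    Set (EuclideanSpace ℝ (Fin n) × EuclideanSpace ℝ (Fin n)) :=
  {p | p.2 ∈ subdiff ρ φ p.1}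

/-- The (Bouligand–Severi) tangent/contingent cone to `S` at `z`. -/
def contTangentCone {F : Type*} [NormedAddCommGroup F] [NormedSpace ℝ F]
    (S : Set F) (z : F) : Set F :=
  {w | ∃ (t : ℕ → ℝ) (ws : ℕ → F), (∀ k, 0 < t k) ∧ Tendsto t atTop (𝓝 0) ∧
    Tendsto ws atTop (𝓝 w) ∧ ∀ k, z + t k • ws k ∈ S}

/-- Inner product of pairs in `ℝⁿ × ℝⁿ`. -/
def pairInner (p q : EuclideanSpace ℝ (Fin n) × EuclideanSpace ℝ (Fin n)) : ℝ :=
  ⟪p.1, q.1⟫ + ⟪p.2, q.2⟫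

/-- The (Fréchet) regular normal cone to `S` at `z`. -/
def regNormalCone (S : Set (EuclideanSpace ℝ (Fin n) × EuclideanSpace ℝ (Fin n)))
    (z : EuclideanSpace ℝ (Fin n) × EuclideanSpace ℝ (Fin n)) :
    Set (EuclideanSpace ℝ (Fin n) × EuclideanSpace ℝ (Fin n)) :=
  {v | ∀ ε > (0 : ℝ), ∃ δ > (0 : ℝ), ∀ u ∈ S, ‖u - z‖ < δ →
      pairInner v (u - z) ≤ ε * ‖u - z‖}

/-- The (Mordukhovich) limiting normal cone to `S` at `z`. -/
def limNormalCone (S : Set (EuclideanSpace ℝ (Fin n) × EuclideanSpace ℝ (Fin n)))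
    (z : EuclideanSpace ℝ (Fin n) × EuclideanSpace ℝ (Fin n)) :
    Set (EuclideanSpace ℝ (Fin n) × EuclideanSpace ℝ (Fin n)) :=
  {v | ∃ zs vs : ℕ → EuclideanSpace ℝ (Fin n) × EuclideanSpace ℝ (Fin n),
    (∀ k, zs k ∈ S) ∧ Tendsto zs atTop (𝓝 z) ∧ Tendsto vs atTop (𝓝 v) ∧
    ∀ k, vs k ∈ regNormalCone S (zs k)}

/-- The Moreau envelope `e_λ φ`. -/
def moreau (lam : ℝ) (φ : EuclideanSpace ℝ (Fin n) → EReal)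
    (x : EuclideanSpace ℝ (Fin n)) : EReal :=
  ⨅ y, (φ y + ((‖y - x‖ ^ 2 / (2 * lam) : ℝ) : EReal))

/-- Second-order difference quotient `Δ²_τ φ(x,v)(u)`. -/
def delta2 (φ : EuclideanSpace ℝ (Fin n) → EReal) (x v : EuclideanSpace ℝ (Fin n))
    (τ : ℝ) (u : EuclideanSpace ℝ (Fin n)) : EReal :=
  ((2 / τ ^ 2 : ℝ) : EReal) * (φ (x + τ • u) - φ x - ((τ * ⟪v, u⟫ : ℝ) : EReal))

/-- The second subderivative `d²φ(x,v)(w)`. -/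
def secondSubderiv (φ : EuclideanSpace ℝ (Fin n) → EReal)
    (x v w : EuclideanSpace ℝ (Fin n)) : EReal :=
  Filter.liminf (fun p : ℝ × EuclideanSpace ℝ (Fin n) => delta2 φ x v p.1 p.2)
    ((𝓝[>] (0 : ℝ)) ×ˢ 𝓝 w)

/-- Twice epi-differentiability of `φ` at `x` for `v`. -/
def TwiceEpiDiff (φ : EuclideanSpace ℝ (Fin n) → EReal)
    (x v : EuclideanSpace ℝ (Fin n)) : Prop :=
  ∀ w : EuclideanSpace ℝ (Fin n), ∀ τ : ℕ → ℝ, (∀ k, 0 < τ k) →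
    Tendsto τ atTop (𝓝 0) →
    ∃ ws : ℕ → EuclideanSpace ℝ (Fin n), Tendsto ws atTop (𝓝 w) ∧
      Tendsto (fun k => delta2 φ x v (τ k) (ws k)) atTop (𝓝 (secondSubderiv φ x v w))

/-- Generalized twice differentiability of `φ` at `x` for `v`. -/
def GenTwiceDiff (φ : EuclideanSpace ℝ (Fin n) → EReal)
    (x v : EuclideanSpace ℝ (Fin n)) : Prop :=
  TwiceEpiDiff φ x v ∧
    ∃ (A : EuclideanSpace ℝ (Fin n) →ₗ[ℝ] EuclideanSpace ℝ (Fin n))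
      (L : Submodule ℝ (EuclideanSpace ℝ (Fin n))),
      (∀ u w, ⟪A u, w⟫ = ⟪u, A w⟫) ∧
      (∀ w ∈ L, secondSubderiv φ x v w = ((⟪w, A w⟫ : ℝ) : EReal)) ∧
      (∀ w ∉ L, secondSubderiv φ x v w = (⊤ : EReal))

/-!
Both sides are equivalent to the monotonicity on `[0, 1]` of `s ↦ ⟪∇φ(x + s(u - x)), u - x⟫`
for all `x, u ∈ Ω`, i.e. of the derivative of `φ` along the segment from `x` to `u`.
A convex `φ` has a monotone gradient, and tangent vectors `(w, z)` to the graph of a monotone map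
satisfy `⟪z, w⟫ ≥ 0` as limits of `⟪Δg, Δx⟫ / t² ≥ 0`. Conversely, as `∇φ` is Lipschitz, its
difference quotients along a line are bounded, so a cluster point `z` of them yields a tangent
vector `(w, z)` to the graph; thus the derivative along every line has nonnegative lower right
Dini derivatives, which forces a continuous function to be monotone.
-/

section LineRestriction

variable {E : Type*} [AddCommGroup E] [Module ℝ E]

theorem convexOn_iff_forall_convexOn_line {Ω : Set E} (hΩ : Convex ℝ Ω) {φ : E → ℝ} :
    ConvexOn ℝ Ω φ ↔ ∀ x ∈ Ω, ∀ u ∈ Ω, ConvexOn ℝ (Icc 0 1) fun s : ℝ => φ (x + s • (u - x)) := by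
  constructor
  · intro hφ x hx u hu
    have hline : (fun s : ℝ => φ (x + s • (u - x))) = φ ∘ AffineMap.lineMap x u := by
      funext s
      simp only [Function.comp_apply, AffineMap.lineMap_apply_module', add_comm]
    rw [hline]
    refine (hφ.comp_affineMap _).subset (fun s hs => ?_) (convex_Icc 0 1)
    simpa only [mem_preimage, AffineMap.lineMap_apply_module', add_comm] using
      hΩ.add_smul_sub_mem hx hu hs
  · intro h
    refine ⟨hΩ, fun p hp q hq a b ha hb hab => ?_⟩
    have hθ := (h p hp q hq).2 (left_mem_Icc.2 zero_le_one) (right_mem_Icc.2 zero_le_one)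
      ha hb hab
    have hpt : p + b • (q - p) = a • p + b • q := by
      rw [eq_sub_of_add_eq hab, sub_smul, one_smul, smul_sub]; abel
    simpa [hpt] using hθ

end LineRestriction

theorem convexOn_iff_monotoneOn_of_hasDerivAt {D : Set ℝ} (hD : Convex ℝ D) {f f' : ℝ → ℝ}
    (hf : ∀ x ∈ D, HasDerivAt f (f' x) x) : ConvexOn ℝ D f ↔ MonotoneOn f' D := by
  have hderiv : EqOn (deriv f) f' D := fun x hx => (hf x hx).deriv
  constructor
  · intro hfc
    exact (hfc.monotoneOn_deriv fun x hx => (hf x hx).differentiableAt).congr hderiv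
  · intro hmono
    refine (hmono.congr hderiv.symm).mono interior_subset |>.convexOn_of_deriv hD
      (fun x hx => (hf x hx).continuousAt.continuousWithinAt)
      (fun x hx => (hf x (interior_subset hx)).differentiableAt.differentiableWithinAt)

theorem monotoneOn_of_frequently_neg_lt_slope {ψ : ℝ → ℝ} {D : Set ℝ} [D.OrdConnected]
    (hψ : ContinuousOn ψ D) (h : ∀ t ∈ D, ∀ r > 0, ∃ᶠ s in 𝓝[>] t, -r < slope ψ t s) :
    MonotoneOn ψ D := by
  intro a ha b hb hab
  have hsub : Icc a b ⊆ D := Set.Icc_subset D ha hb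
  have key : ∀ ⦃x⦄, x ∈ Icc a b → -ψ x ≤ -ψ a := by
    refine image_le_of_liminf_slope_right_le_deriv_boundary (f := fun t => -ψ t)
      (B' := fun _ => 0) (hψ.mono hsub).neg le_rfl continuousOn_const
      (fun x _ => hasDerivWithinAt_const x _ _) fun x hx r hr => ?_
    refine (h x (hsub (Ico_subset_Icc_self hx)) r hr).mono fun s hs => ?_
    have hneg : slope (fun t => -ψ t) x s = -slope ψ x s := by
      simp only [slope_def_field]; ring
    rw [hneg]; linarith
  simpa using key (right_mem_Icc.2 hab)

section InnerProductSpace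

variable {F : Type*} [NormedAddCommGroup F] [InnerProductSpace ℝ F]

theorem inner_nonneg_of_mem_contTangentCone {S : Set (F × F)} {p₀ : F × F}
    (hS : ∀ p ∈ S, 0 ≤ ⟪p.2 - p₀.2, p.1 - p₀.1⟫) {w z : F}
    (hwz : (w, z) ∈ contTangentCone S p₀) : 0 ≤ ⟪z, w⟫ := by
  obtain ⟨t, ws, ht_pos, -, hws, hmem⟩ := hwz
  have hk : ∀ k, 0 ≤ ⟪(ws k).2, (ws k).1⟫ := fun k => by
    have h := hS _ (hmem k)
    simp only [Prod.fst_add, Prod.snd_add, Prod.smul_fst, Prod.smul_snd, add_sub_cancel_left,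
      real_inner_smul_left, real_inner_smul_right, ← mul_assoc] at h
    exact nonneg_of_mul_nonneg_right h (mul_pos (ht_pos k) (ht_pos k))
  exact ge_of_tendsto'
    (((continuous_snd.tendsto _).comp hws).inner ((continuous_fst.tendsto _).comp hws)) hk

variable [CompleteSpace F]

theorem HasGradientAt.hasDerivAt_comp_add_smul {φ : F → ℝ} {g x w : F} {t : ℝ}
    (h : HasGradientAt φ g (x + t • w)) :
    HasDerivAt (fun s : ℝ => φ (x + s • w)) ⟪g, w⟫ t := by
  have hline : HasDerivAt (fun s : ℝ => x + s • w) w t := by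
    simpa using ((hasDerivAt_id t).smul_const w).const_add x
  simpa [InnerProductSpace.toDual_apply_apply, Function.comp_def] using
    (hasGradientAt_iff_hasFDerivAt.mp h).comp_hasDerivAt t hline

theorem convexOn_iff_forall_monotoneOn_inner_gradient {Ω : Set F} (hΩ : Convex ℝ Ω)
    {φ : F → ℝ} {g : F → F} (hφ : ∀ x ∈ Ω, HasGradientAt φ (g x) x) :
    ConvexOn ℝ Ω φ ↔
      ∀ x ∈ Ω, ∀ u ∈ Ω, MonotoneOn (fun s : ℝ => ⟪g (x + s • (u - x)), u - x⟫) (Icc 0 1) := by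
  rw [convexOn_iff_forall_convexOn_line hΩ]
  refine forall₂_congr fun x hx => forall₂_congr fun u hu => ?_
  exact convexOn_iff_monotoneOn_of_hasDerivAt (convex_Icc 0 1) fun s hs =>
    (hφ _ (hΩ.add_smul_sub_mem hx hu hs)).hasDerivAt_comp_add_smul

theorem ConvexOn.inner_gradient_sub_nonneg {Ω : Set F} {φ : F → ℝ} {g : F → F}
    (hφc : ConvexOn ℝ Ω φ) (hφ : ∀ x ∈ Ω, HasGradientAt φ (g x) x) {x u : F} (hx : x ∈ Ω)
    (hu : u ∈ Ω) : 0 ≤ ⟪g u - g x, u - x⟫ := by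
  have h := (convexOn_iff_forall_monotoneOn_inner_gradient hφc.1 hφ).1 hφc x hx u hu
    (left_mem_Icc.2 zero_le_one) (right_mem_Icc.2 zero_le_one) zero_le_one
  simp only [zero_smul, add_zero, one_smul, add_sub_cancel] at h
  rw [inner_sub_left]
  linarith

end InnerProductSpace

section ProperSpace

variable {F : Type*} [NormedAddCommGroup F] [InnerProductSpace ℝ F] [ProperSpace F]

theorem exists_mem_contTangentCone_graph_of_lipschitzOnWith {Ω : Set F} {g : F → F} {K : NNReal}
    (hg : LipschitzOnWith K g Ω) {y w : F} (hy : y ∈ Ω) {T : ℕ → ℝ} (hT_pos : ∀ k, 0 < T k)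
    (hT : Tendsto T atTop (𝓝 0)) (hmem : ∀ k, y + T k • w ∈ Ω) :
    ∃ (z : F) (σ : ℕ → ℕ), StrictMono σ ∧
      (w, z) ∈ contTangentCone {p : F × F | p.1 ∈ Ω ∧ p.2 = g p.1} (y, g y) ∧
      Tendsto (fun k => (T (σ k))⁻¹ • (g (y + T (σ k) • w) - g y)) atTop (𝓝 z) := by
  set Q : ℕ → F := fun k => (T k)⁻¹ • (g (y + T k • w) - g y) with hQ
  have hQ_bdd : ∀ k, Q k ∈ Metric.closedBall (0 : F) (K * ‖w‖) := fun k => by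
    have hlip : ‖g (y + T k • w) - g y‖ ≤ K * (T k * ‖w‖) := by
      simpa [dist_eq_norm, norm_smul, abs_of_pos (hT_pos k)] using
        hg.dist_le_mul _ (hmem k) _ hy
    rw [Metric.mem_closedBall, dist_zero_right, hQ, norm_smul, norm_inv, Real.norm_eq_abs,
      abs_of_pos (hT_pos k), inv_mul_le_iff₀ (hT_pos k)]
    linarith
  obtain ⟨z, -, σ, hσ, hz⟩ := (isCompact_closedBall _ _).tendsto_subseq hQ_bdd
  refine ⟨z, σ, hσ, ⟨T ∘ σ, fun k => (w, Q (σ k)), fun k => hT_pos _,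
    hT.comp hσ.tendsto_atTop, tendsto_const_nhds.prodMk_nhds hz, fun k => ⟨hmem _, ?_⟩⟩, hz⟩
  change g y + T (σ k) • Q (σ k) = g (y + T (σ k) • w)
  rw [hQ, smul_inv_smul₀ (hT_pos (σ k)).ne', add_sub_cancel]

theorem frequently_neg_lt_slope_inner_of_contTangentCone {Ω : Set F} (hΩ : IsOpen Ω) {g : F → F}
    {K : NNReal} (hg : LipschitzOnWith K g Ω) {x w : F} {t : ℝ} (ht : x + t • w ∈ Ω)
    (hcone : ∀ z, (w, z) ∈ contTangentCone {p : F × F | p.1 ∈ Ω ∧ p.2 = g p.1}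
      (x + t • w, g (x + t • w)) → 0 ≤ ⟪z, w⟫)
    {r : ℝ} (hr : 0 < r) : ∃ᶠ s in 𝓝[>] t, -r < slope (fun s => ⟪g (x + s • w), w⟫) t s := by
  by_contra hcon
  rw [not_frequently] at hcon
  have hline : ∀ᶠ s in 𝓝[>] t, x + s • w ∈ Ω := nhdsWithin_le_nhds <|
    (continuous_const.add (continuous_id.smul continuous_const)).continuousAt.preimage_mem_nhds
      (hΩ.mem_nhds ht)
  have hgt : ∀ᶠ s in 𝓝[>] t, t < s := self_mem_nhdsWithin
  obtain ⟨s, hs, hs_mem⟩ := exists_seq_forall_of_frequently (hgt.and (hline.and hcon)).frequently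
  have hshift : ∀ k, x + t • w + (s k - t) • w = x + s k • w := fun k => by
    rw [sub_smul]; abel
  obtain ⟨z, σ, -, hz_cone, hz⟩ := exists_mem_contTangentCone_graph_of_lipschitzOnWith hg ht
    (T := fun k => s k - t) (fun k => sub_pos.2 (hs_mem k).1)
    (by simpa using (tendsto_nhds_of_tendsto_nhdsWithin hs).sub_const t)
    (fun k => (hshift k).symm ▸ (hs_mem k).2.1)
  have hslope : ∀ k, ⟪(s k - t)⁻¹ • (g (x + t • w + (s k - t) • w) - g (x + t • w)), w⟫ =
      slope (fun s => ⟪g (x + s • w), w⟫) t (s k) := fun k => by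
    rw [hshift, real_inner_smul_left, inner_sub_left, slope_def_field, inv_mul_eq_div]
  have hz_le : ⟪z, w⟫ ≤ -r := le_of_tendsto' (hz.inner tendsto_const_nhds) fun k => by
    rw [hslope]; exact not_lt.1 (hs_mem (σ k)).2.2
  linarith [hcone z hz_cone]

end ProperSpace

theorem statement4_general (n : ℕ) (Ω : Set (EuclideanSpace ℝ (Fin n)))
    (hopen : IsOpen Ω) (hΩconv : Convex ℝ Ω)
    (φ : EuclideanSpace ℝ (Fin n) → ℝ) (g : EuclideanSpace ℝ (Fin n) → EuclideanSpace ℝ (Fin n))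
    (hgrad : ∀ x ∈ Ω, HasGradientAt φ (g x) x)
    (K : NNReal) (hlip : LipschitzOnWith K g Ω) :
    ConvexOn ℝ Ω φ ↔
      ∀ x ∈ Ω, ∀ w z : EuclideanSpace ℝ (Fin n),
        (w, z) ∈ contTangentCone {p : EuclideanSpace ℝ (Fin n) × EuclideanSpace ℝ (Fin n) | p.1 ∈ Ω ∧ p.2 = g p.1} (x, g x) →
        0 ≤ ⟪z, w⟫ := by
  constructor
  · intro hφ x hx w z hwz
    refine inner_nonneg_of_mem_contTangentCone (fun p hp => ?_) hwz
    rw [hp.2]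
    exact hφ.inner_gradient_sub_nonneg hgrad hx hp.1
  · intro hcone
    refine (convexOn_iff_forall_monotoneOn_inner_gradient hΩconv hgrad).2 fun x hx u hu => ?_
    have hseg : ∀ s ∈ Icc (0 : ℝ) 1, x + s • (u - x) ∈ Ω := fun s hs =>
      hΩconv.add_smul_sub_mem hx hu hs
    refine monotoneOn_of_frequently_neg_lt_slope ?_ fun s hs r hr =>
      frequently_neg_lt_slope_inner_of_contTangentCone hopen hlip (hseg s hs)
        (hcone _ (hseg s hs) (u - x)) hr
    exact (hlip.continuousOn.comp (Continuous.continuousOn (by fun_prop)) hseg).inner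
      continuousOn_const

/-- convexity on an open convex set characterized via tangent cones
to the graph of the gradient. -/
theorem statement4 (n : ℕ) (Ω : Set (EuclideanSpace ℝ (Fin n)))
    (hne : Ω.Nonempty) (hopen : IsOpen Ω) (hΩconv : Convex ℝ Ω)
    (φ : EuclideanSpace ℝ (Fin n) → ℝ) (g : EuclideanSpace ℝ (Fin n) → EuclideanSpace ℝ (Fin n))
    (hgrad : ∀ x ∈ Ω, HasGradientAt φ (g x) x)
    (K : NNReal) (hlip : LipschitzOnWith K g Ω) :
    ConvexOn ℝ Ω φ ↔
      ∀ x ∈ Ω, ∀ w z : EuclideanSpace ℝ (Fin n),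
        (w, z) ∈ contTangentCone {p : EuclideanSpace ℝ (Fin n) × EuclideanSpace ℝ (Fin n) | p.1 ∈ Ω ∧ p.2 = g p.1} (x, g x) →
        0 ≤ ⟪z, w⟫ :=
  statement4_general n Ω hopen hΩconv φ g hgrad K hlip
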